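/- arXiv:1912.05871 — 4 statements merged into one kernel-verified Lean document; each statement's English description precedes it below -/
import Mathlib

section
/- Let G be a finite simple connected graph and let u, v be two distinct non-adjacent vertices of G. Then the connective eccentricity index strictly increases upon adding the edge uv: ξ^ce(G) < ξ^ce(G + uv). -/
open Finset
open scoped Classical

namespace CEI

variable {V : Type*}

/-- Degree of a vertex. -/
noncomputable def deg [Fintype V] (G : SimpleGraph V) (v : V) : ℕ :=
  (Finset.univ.filter fun u => G.Adj v u).card

/-- Eccentricity of a vertex. -/
noncomputable def ecc [Fintype V] (G : SimpleGraph V) (v : V) : ℕ :=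
  Finset.univ.sup fun u => G.dist v u

/-- Connective eccentricity index. -/
noncomputable def cei [Fintype V] (G : SimpleGraph V) : ℝ :=
  ∑ v : V, (deg G v : ℝ) / (ecc G v)

/-- Diameter. -/
noncomputable def diam [Fintype V] (G : SimpleGraph V) : ℕ :=
  Finset.univ.sup fun v => ecc G v

/-- `G` is `k`-connected: removing fewer than `k` vertices leaves a
connected graph with more than one vertex. -/
def KConnected [Fintype V] (k : ℕ) (G : SimpleGraph V) : Prop :=
  ∀ A : Finset V, A.card < k →
    (G.induce ((A : Set V)ᶜ)).Connected ∧ 1 < ((A : Set V)ᶜ).ncard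

/-- A set of pairwise non-adjacent vertices. -/
def IsIndepSet (G : SimpleGraph V) (s : Set V) : Prop :=
  s.Pairwise fun u v => ¬ G.Adj u v

/-- Independence number. -/
noncomputable def indepNum [Fintype V] (G : SimpleGraph V) : ℕ :=
  Finset.univ.sup fun s : Finset V => if IsIndepSet G ↑s then s.card else 0

/-- A vertex cut: deleting `A` disconnects `G`. -/
def IsVertexCut (G : SimpleGraph V) (A : Finset V) : Prop :=
  ¬ (G.induce ((A : Set V)ᶜ)).Preconnected

/-- Sequential join of complete graphs with part sizes `cs`. -/
def seqCompleteJoin (cs : List ℕ) : SimpleGraph ((i : Fin cs.length) × Fin (cs.get i)) where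
  Adj x y := x ≠ y ∧ (x.1.val = y.1.val ∨ x.1.val + 1 = y.1.val ∨ y.1.val + 1 = x.1.val)
  symm := ⟨fun x y ⟨h1, h2⟩ => ⟨h1.symm, by tauto⟩⟩
  loopless := ⟨fun x ⟨h, _⟩ => h rfl⟩

/-- `K_k ∨ (K_a ∪ K_b)`. -/
def KJoin2 (k a b : ℕ) : SimpleGraph (Fin (k + a + b)) where
  Adj x y := x ≠ y ∧ (x.val < k ∨ y.val < k ∨ (x.val < k + a ↔ y.val < k + a))
  symm := ⟨fun x y ⟨h1, h2⟩ => ⟨h1.symm, by tauto⟩⟩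
  loopless := ⟨fun x ⟨h, _⟩ => h rfl⟩

/-- `K_b ∨ a K_1`. -/
def splitGraph (b a : ℕ) : SimpleGraph (Fin (b + a)) where
  Adj x y := x ≠ y ∧ (x.val < b ∨ y.val < b)
  symm := ⟨fun x y ⟨h1, h2⟩ => ⟨h1.symm, by tauto⟩⟩
  loopless := ⟨fun x ⟨h, _⟩ => h rfl⟩

/-- `S_{n,α} = K_k ∨ (K_1 ∪ (K_{n-k-α} ∨ (α-1)K_1))`; vertices `0,…,k-1` form the
clique `K_k` joined to everything, vertex `k` is the isolated-ish `K_1`, vertices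
`k+1,…,n-α` form `K_{n-k-α}`, and vertices `n-α+1,…,n-1` are the `α-1` independent ones. -/
def Sgraph (n k a : ℕ) : SimpleGraph (Fin n) where
  Adj x y := x ≠ y ∧ (x.val < k ∨ y.val < k ∨
    (x.val ≠ k ∧ y.val ≠ k ∧ ¬(n + 1 - a ≤ x.val ∧ n + 1 - a ≤ y.val)))
  symm := ⟨fun x y ⟨h1, h2⟩ => ⟨h1.symm, by tauto⟩⟩
  loopless := ⟨fun x ⟨h, _⟩ => h rfl⟩


section Monotonicity

variable [Fintype V] {G H : SimpleGraph V}

lemma deg_mono (h : G ≤ H) (w : V) : deg G w ≤ deg H w :=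
  Finset.card_le_card fun x hx => by simp only [Finset.mem_filter] at hx ⊢; exact ⟨hx.1, h hx.2⟩

lemma deg_lt_deg_of_adj (h : G ≤ H) {a b : V} (hH : H.Adj a b) (hG : ¬ G.Adj a b) :
    deg G a < deg H a := by
  refine Finset.card_lt_card (Finset.ssubset_iff_of_subset ?_ |>.mpr ⟨b, ?_, ?_⟩)
  · exact fun x hx => by simp only [Finset.mem_filter] at hx ⊢; exact ⟨hx.1, h hx.2⟩
  · simpa using hH
  · simpa using hG

lemma ecc_anti (hG : G.Connected) (h : G ≤ H) (w : V) : ecc H w ≤ ecc G w :=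
  Finset.sup_le fun x _ => ((hG w x).dist_anti h).trans (Finset.le_sup (Finset.mem_univ x))

lemma ecc_pos (hG : G.Connected) {w x : V} (hwx : w ≠ x) : 0 < ecc G w :=
  (hG.pos_dist_of_ne hwx).trans_le (Finset.le_sup (f := fun y => G.dist w y) (Finset.mem_univ x))

/-- Adding edges to a connected graph raises every degree and lowers every eccentricity, and
the endpoint of a new edge gains a neighbour. -/
theorem cei_lt_cei_of_lt (hG : G.Connected) (h : G < H) : cei G < cei H := by
  obtain ⟨a, b, hH, hGab⟩ : ∃ a b, H.Adj a b ∧ ¬ G.Adj a b := by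
    simpa [SimpleGraph.le_iff_adj] using h.not_ge
  have hHconn : H.Connected := hG.mono h.le
  have heccH : ∀ w, 0 < (ecc H w : ℝ) := fun w => by
    obtain ⟨x, hwx⟩ : ∃ x, w ≠ x := by
      by_cases hwa : w = a
      · exact ⟨b, hwa ▸ hH.ne⟩
      · exact ⟨a, hwa⟩
    exact_mod_cast ecc_pos hHconn hwx
  refine Finset.sum_lt_sum (fun w _ => ?_) ⟨a, Finset.mem_univ a, ?_⟩
  · exact div_le_div₀ (by positivity) (mod_cast deg_mono h.le w) (heccH w)
      (mod_cast ecc_anti hG h.le w)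
  · exact div_lt_div₀ (mod_cast deg_lt_deg_of_adj h.le hH hGab) (mod_cast ecc_anti hG h.le a)
      (by positivity) (heccH a)

end Monotonicity

/-- adding an edge between non-adjacent vertices of a connected
graph strictly increases the connective eccentricity index. -/
theorem cei_lt_cei_addEdge {V : Type} [Fintype V] (G : SimpleGraph V)
    (hconn : G.Connected) {u v : V} (hne : u ≠ v) (hadj : ¬ G.Adj u v) :
    cei G < cei (G ⊔ SimpleGraph.edge u v) := by
  refine cei_lt_cei_of_lt hconn (lt_of_le_not_ge le_sup_left fun h => hadj (h ?_))
  simp [SimpleGraph.edge_adj, hne]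

end CEI
end

section
/- Let k ≥ 1, let d ≥ 4 be even, and let n ≥ k(d-1)+2. If G is a graph attaining the maximum connective eccentricity index among all k-connected graphs of order n with diameter d, then G is isomorphic to the sequential join G(n,k,d) = K_1 ∨ K_k ∨ ⋯ ∨ K_k ∨ K_{n-kd+2k-2} ∨ K_k ∨ ⋯ ∨ K_k ∨ K_1, where on each side of the central clique K_{n-kd+2k-2} there are (d-2)/2 copies of K_k. -/
/-!
Let `ℓ v` be the distance from a vertex of eccentricity `d`. Every edge of `G` joins equal or
consecutive layers of `ℓ`, so `G` is a spanning subgraph of the graph in which all such pairs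
are adjacent. That graph is still `k`-connected, has diameter `d`, and gives each `v` the
eccentricity `max (ℓ v) (d - ℓ v) ≤ ε_G(v)`; by maximality `G` is that graph, and `ξ^ce(G)` is
an explicit quadratic function of the layer sizes. Each inner layer is a vertex cut, hence has
at least `k` vertices. Moving one vertex from a layer `j < d/2` with more than its minimum
number of vertices to layer `j + 1` strictly increases `ξ^ce` as long as layer `j - 1` has at most
`k` vertices (the weights `1 / max(i, d - i)` grow towards the centre). Working inwards from
both ends (the right half via `ℓ ↦ d - ℓ`), every layer but the central one has its minimum
size, which is the layer profile of `G(n,k,d)`.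
-/

open Finset
open scoped Classical

namespace CEI

variable {V : Type*}

def Near (i j : ℕ) : Prop := i = j ∨ i + 1 = j ∨ j + 1 = i

theorem near_refl (i : ℕ) : Near i i := Or.inl rfl

theorem near_comm {i j : ℕ} : Near i j ↔ Near j i := by unfold Near; omega

theorem sum_ite_near {d t : ℕ} (ht : t < d) (g : ℕ → ℝ) :
    ∑ i ∈ range (d + 1), (if Near t i then g i else 0)
      = (if t = 0 then 0 else g (t - 1)) + g t + g (t + 1) := by
  rw [← sum_filter]
  rcases t with _ | s
  · have hfilter : (range (d + 1)).filter (Near 0) = {0, 1} := by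
      ext i; simp only [Near, mem_filter, mem_range, mem_insert, mem_singleton]; omega
    rw [hfilter, sum_pair zero_ne_one]
    simp
  · have hfilter : (range (d + 1)).filter (Near (s + 1)) = {s, s + 1, s + 2} := by
      ext i; simp only [Near, mem_filter, mem_range, mem_insert, mem_singleton]; omega
    rw [hfilter, sum_insert (by simp), sum_pair (by omega)]
    simp [add_assoc]

/-- `max i (d - i)` is the eccentricity of a vertex in layer `i` (`ecc_layerGraph`). -/
noncomputable def eccWeight (d i : ℕ) : ℝ := ((max i (d - i) : ℕ) : ℝ)⁻¹

theorem eccWeight_nonneg (d i : ℕ) : 0 ≤ eccWeight d i := by unfold eccWeight; positivity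

theorem eccWeight_le_of_lt {d i i' : ℕ} (h : i < i') (h' : i' ≤ d - i) :
    eccWeight d i ≤ eccWeight d i' := by
  unfold eccWeight
  exact inv_anti₀ (by norm_cast; omega) (by norm_cast; omega)

theorem eccWeight_lt_of_lt {d i i' : ℕ} (h : i < i') (h' : i' < d - i) :
    eccWeight d i < eccWeight d i' := by
  unfold eccWeight
  exact inv_strictAnti₀ (by norm_cast; omega) (by norm_cast; omega)

noncomputable def nbhdSize (d : ℕ) (x : ℕ → ℝ) (i : ℕ) : ℝ :=
  ∑ j ∈ range (d + 1), if Near i j then x j else 0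

noncomputable def profileCei (d : ℕ) (x : ℕ → ℝ) : ℝ :=
  ∑ i ∈ range (d + 1), eccWeight d i * x i * (nbhdSize d x i - 1)

/-- A vertex inserted into layer `t` has weight `eccWeight d t` and degree `nbhdSize d x t`, and
it raises by one the degree of each vertex of a layer `i` near `t`. -/
noncomputable def insertGain (d : ℕ) (x : ℕ → ℝ) (t : ℕ) : ℝ :=
  ∑ i ∈ range (d + 1), if Near t i then (eccWeight d t + eccWeight d i) * x i else 0

theorem nbhdSize_add_single {d t : ℕ} (ht : t ≤ d) (x : ℕ → ℝ) (i : ℕ) :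
    nbhdSize d (x + Pi.single t 1) i = nbhdSize d x i + if Near i t then 1 else 0 := by
  have hsingle : ∀ j, (if Near i j then (x + Pi.single t 1 : ℕ → ℝ) j else 0)
      = (if Near i j then x j else 0) + if j = t then (if Near i t then 1 else 0) else 0 := by
    intro j
    by_cases hj : j = t
    · subst hj; split_ifs <;> simp_all
    · simp [hj]
  simp only [nbhdSize, hsingle, sum_add_distrib, sum_ite_eq', mem_range, Nat.lt_succ_of_le ht,
    if_true]

theorem insertGain_eq (d : ℕ) (x : ℕ → ℝ) (t : ℕ) :
    insertGain d x t = eccWeight d t * nbhdSize d x t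
      + ∑ i ∈ range (d + 1), if Near i t then eccWeight d i * x i else 0 := by
  simp only [insertGain, nbhdSize, mul_sum, ← sum_add_distrib, near_comm (i := t)]
  refine sum_congr rfl fun i _ => ?_
  split_ifs <;> ring

theorem profileCei_add_single {d t : ℕ} (ht : t ≤ d) (x : ℕ → ℝ) :
    profileCei d (x + Pi.single t 1) = profileCei d x + insertGain d x t := by
  have hterm : ∀ i, eccWeight d i * (x + Pi.single t 1 : ℕ → ℝ) i
        * (nbhdSize d (x + Pi.single t 1) i - 1)
      = eccWeight d i * x i * (nbhdSize d x i - 1) + (if Near i t then eccWeight d i * x i else 0)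
        + if i = t then eccWeight d t * nbhdSize d x t else 0 := by
    intro i
    rw [nbhdSize_add_single ht]
    by_cases hi : i = t
    · subst hi
      rw [if_pos (near_refl i), if_pos (near_refl i), if_pos rfl, Pi.add_apply, Pi.single_eq_same]
      ring
    · simp only [Pi.add_apply, Pi.single_apply, hi, if_false]
      split_ifs <;> ring
  simp only [profileCei, hterm, sum_add_distrib, sum_ite_eq', mem_range, Nat.lt_succ_of_le ht,
    if_true, insertGain_eq]
  ring

theorem insertGain_lt_insertGain_succ {d j : ℕ} (hj : 2 * j + 2 ≤ d) {y : ℕ → ℝ}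
    (hy : ∀ i, 0 ≤ y i) (hpos : 0 < y j + y (j + 1)) (hprev : j = 0 ∨ y (j - 1) ≤ y (j + 2)) :
    insertGain d y j < insertGain d y (j + 1) := by
  have hdiff : insertGain d y (j + 1) - insertGain d y j
      = (eccWeight d (j + 1) - eccWeight d j) * (y j + y (j + 1))
        + ((eccWeight d (j + 1) + eccWeight d (j + 2)) * y (j + 2)
          - if j = 0 then 0 else (eccWeight d j + eccWeight d (j - 1)) * y (j - 1)) := by
    rw [insertGain, insertGain, sum_ite_near (by omega), sum_ite_near (by omega)]
    simp only [Nat.add_eq_zero_iff, one_ne_zero, and_false, if_false, Nat.add_sub_cancel]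
    ring
  have hgain : 0 < (eccWeight d (j + 1) - eccWeight d j) * (y j + y (j + 1)) :=
    mul_pos (sub_pos.2 (eccWeight_lt_of_lt (by omega) (by omega))) hpos
  have hrest : (if j = 0 then 0 else (eccWeight d j + eccWeight d (j - 1)) * y (j - 1))
      ≤ (eccWeight d (j + 1) + eccWeight d (j + 2)) * y (j + 2) := by
    rcases hprev with rfl | hprev
    · simpa using mul_nonneg (add_nonneg (eccWeight_nonneg d 1) (eccWeight_nonneg d 2)) (hy 2)
    split_ifs
    · exact mul_nonneg (add_nonneg (eccWeight_nonneg _ _) (eccWeight_nonneg _ _)) (hy _)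
    have hw : eccWeight d j + eccWeight d (j - 1) ≤ eccWeight d (j + 1) + eccWeight d (j + 2) :=
      add_le_add (eccWeight_le_of_lt (by omega) (by omega))
        (eccWeight_le_of_lt (by omega) (by omega)) |>.trans_eq (add_comm _ _)
    exact mul_le_mul hw hprev (hy _) (add_nonneg (eccWeight_nonneg _ _) (eccWeight_nonneg _ _))
  linarith

section LayerGraph

variable {V : Type*}

theorem apply_le_of_range_eq_Iic {f : V → ℕ} {d : ℕ} (hf : Set.range f = Set.Iic d) (v : V) :
    f v ≤ d :=
  Set.mem_Iic.1 (hf ▸ Set.mem_range_self v)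

theorem exists_apply_eq_of_range_eq_Iic {f : V → ℕ} {d i : ℕ} (hf : Set.range f = Set.Iic d)
    (hi : i ≤ d) : ∃ v, f v = i :=
  Set.mem_range.1 (hf ▸ Set.mem_Iic.2 hi)

theorem range_reflect {f : V → ℕ} {d : ℕ} (hf : Set.range f = Set.Iic d) :
    Set.range (fun v => d - f v) = Set.Iic d := by
  ext i
  refine ⟨by rintro ⟨v, rfl⟩; exact Set.mem_Iic.2 (Nat.sub_le d (f v)), fun hi => ?_⟩
  obtain ⟨v, hv⟩ := exists_apply_eq_of_range_eq_Iic hf (Nat.sub_le d i)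
  exact ⟨v, by simp only [hv]; exact Nat.sub_sub_self hi⟩

def layerGraph (f : V → ℕ) : SimpleGraph V where
  Adj u v := u ≠ v ∧ Near (f u) (f v)
  symm := ⟨fun _ _ h => ⟨h.1.symm, near_comm.1 h.2⟩⟩
  loopless := ⟨fun _ h => h.1 rfl⟩

theorem layerGraph_reflect {f : V → ℕ} {d : ℕ} (hf : ∀ v, f v ≤ d) :
    layerGraph (fun v => d - f v) = layerGraph f := by
  ext u v
  refine and_congr_right fun _ => ?_
  have := hf u
  have := hf v
  dsimp only [Near]
  omega

theorem induce_layerGraph (f : V → ℕ) (s : Set V) :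
    (layerGraph f).induce s = layerGraph fun v : s => f v := by
  ext u v
  simp [layerGraph, Subtype.ext_iff]

theorem le_layerGraph_dist (G : SimpleGraph V) (x₀ : V) : G ≤ layerGraph (G.dist x₀) := by
  intro u v h
  refine ⟨G.ne_of_adj h, ?_⟩
  rcases h.diff_dist_adj (u := x₀) with h' | h' | h' <;> unfold Near <;> omega

theorem exists_mem_support_layer_eq {f : V → ℕ} {u v : V} (p : (layerGraph f).Walk u v)
    {i : ℕ} (hu : f u ≤ i) (hv : i ≤ f v) : ∃ w ∈ p.support, f w = i := by
  induction p with
  | nil => exact ⟨_, List.mem_singleton_self _, by omega⟩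
  | @cons a b _ h _ ih =>
    by_cases ha : f a = i
    · exact ⟨a, List.mem_cons_self, ha⟩
    · have hb : f b ≤ i := by have := h.2; unfold Near at this; omega
      obtain ⟨w, hw, hwi⟩ := ih hb hv
      exact ⟨w, List.mem_cons_of_mem _ hw, hwi⟩

theorem layer_le_add_length {f : V → ℕ} {u v : V} (p : (layerGraph f).Walk u v) :
    f v ≤ f u + p.length := by
  induction p with
  | nil => simp
  | cons h q ih =>
    have := h.2
    simp only [SimpleGraph.Walk.length_cons]
    unfold Near at this
    omega

theorem layer_le_add_dist {f : V → ℕ} {u v : V} (h : (layerGraph f).Reachable u v) :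
    f v ≤ f u + (layerGraph f).dist u v := by
  obtain ⟨p, hp⟩ := h.exists_walk_length_eq_dist
  exact hp ▸ layer_le_add_length p

theorem exists_walk_length_eq_sub {f : V → ℕ} (hf : (Set.range f).OrdConnected) {u v : V}
    (h : f u < f v) : ∃ p : (layerGraph f).Walk u v, p.length = f v - f u := by
  obtain ⟨m, hm⟩ : ∃ m, f v = f u + (m + 1) := ⟨f v - f u - 1, by omega⟩
  rw [hm, Nat.add_sub_cancel_left]
  induction m generalizing v with
  | zero =>
    have hadj : (layerGraph f).Adj u v := ⟨fun h => by rw [h] at hm; omega, by unfold Near; omega⟩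
    exact ⟨hadj.toWalk, rfl⟩
  | succ m ih =>
    obtain ⟨w, hw⟩ : f u + (m + 1) ∈ Set.range f :=
      hf.out (Set.mem_range_self u) (Set.mem_range_self v) ⟨by omega, by omega⟩
    obtain ⟨p, hp⟩ := ih (v := w) (by omega) hw
    have hadj : (layerGraph f).Adj w v := ⟨fun h => by rw [h] at hw; omega, by unfold Near; omega⟩
    exact ⟨p.concat hadj, by rw [SimpleGraph.Walk.length_concat, hp]⟩

theorem layerGraph_reachable {f : V → ℕ} (hf : (Set.range f).OrdConnected) (u v : V) :
    (layerGraph f).Reachable u v := by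
  rcases lt_trichotomy (f u) (f v) with h | h | h
  · exact (exists_walk_length_eq_sub hf h).elim fun p _ => ⟨p⟩
  · by_cases huv : u = v
    · exact huv ▸ SimpleGraph.Reachable.refl u
    · exact SimpleGraph.Adj.reachable ⟨huv, Or.inl h⟩
  · exact (exists_walk_length_eq_sub hf h).elim fun p _ => ⟨p.reverse⟩

variable [Fintype V]

theorem ecc_layerGraph {f : V → ℕ} {d : ℕ} (hf : Set.range f = Set.Iic d) (hd : 0 < d) (v : V) :
    ecc (layerGraph f) v = max (f v) (d - f v) := by
  have hord : (Set.range f).OrdConnected := hf ▸ Set.ordConnected_Iic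
  apply le_antisymm
  · refine Finset.sup_le fun u _ => ?_
    rcases lt_trichotomy (f v) (f u) with h | h | h
    · obtain ⟨p, hp⟩ := exists_walk_length_eq_sub hord h
      have := apply_le_of_range_eq_Iic hf u
      exact (SimpleGraph.dist_le p).trans (by omega)
    · by_cases hvu : v = u
      · simp [hvu]
      · have := SimpleGraph.dist_eq_one_iff_adj.2 (show (layerGraph f).Adj v u from ⟨hvu, Or.inl h⟩)
        omega
    · obtain ⟨p, hp⟩ := exists_walk_length_eq_sub hord h
      rw [SimpleGraph.dist_comm]
      exact (SimpleGraph.dist_le p).trans (by omega)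
  · obtain ⟨u₀, hu₀⟩ := exists_apply_eq_of_range_eq_Iic hf (Nat.zero_le d)
    obtain ⟨u₁, hu₁⟩ := exists_apply_eq_of_range_eq_Iic hf le_rfl
    have h₀ := layer_le_add_dist (layerGraph_reachable hord u₀ v)
    have h₁ := layer_le_add_dist (layerGraph_reachable hord v u₁)
    have e₀ : (layerGraph f).dist v u₀ ≤ ecc (layerGraph f) v := Finset.le_sup (mem_univ u₀)
    have e₁ : (layerGraph f).dist v u₁ ≤ ecc (layerGraph f) v := Finset.le_sup (mem_univ u₁)
    rw [SimpleGraph.dist_comm] at h₀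
    omega

theorem diam_layerGraph {f : V → ℕ} {d : ℕ} (hf : Set.range f = Set.Iic d) (hd : 0 < d) :
    diam (layerGraph f) = d := by
  obtain ⟨u₀, hu₀⟩ := exists_apply_eq_of_range_eq_Iic hf (Nat.zero_le d)
  apply le_antisymm
  · refine Finset.sup_le fun v _ => ?_
    have := apply_le_of_range_eq_Iic hf v
    rw [ecc_layerGraph hf hd]
    omega
  · have : ecc (layerGraph f) u₀ ≤ diam (layerGraph f) := Finset.le_sup (mem_univ u₀)
    rw [ecc_layerGraph hf hd, hu₀] at this
    omega

noncomputable def layerSize (f : V → ℕ) (i : ℕ) : ℕ := #{v | f v = i}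

theorem layerSize_pos_iff {f : V → ℕ} {i : ℕ} : 0 < layerSize f i ↔ i ∈ Set.range f := by
  simp [layerSize, Finset.card_pos, Finset.filter_nonempty_iff]

theorem sum_comp_eq_sum_layerSize {M : Type*} [AddCommMonoid M] {f : V → ℕ} {d : ℕ}
    (hf : ∀ v, f v ≤ d) (F : ℕ → M) :
    ∑ v, F (f v) = ∑ i ∈ range (d + 1), layerSize f i • F i := by
  rw [← sum_fiberwise_of_maps_to' fun v _ => mem_range.2 (Nat.lt_succ_of_le (hf v))]
  simp [layerSize]

theorem sum_layerSize {f : V → ℕ} {d : ℕ} (hf : ∀ v, f v ≤ d) :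
    ∑ i ∈ range (d + 1), layerSize f i = Fintype.card V := by
  simpa using (sum_comp_eq_sum_layerSize (M := ℕ) hf fun _ => 1).symm

theorem layerSize_reflect {f : V → ℕ} {d i : ℕ} (hf : ∀ v, f v ≤ d) (hi : i ≤ d) :
    layerSize (fun v => d - f v) i = layerSize f (d - i) := by
  unfold layerSize
  congr 1
  refine Finset.filter_congr fun v _ => ?_
  have := hf v
  dsimp only
  omega

theorem deg_layerGraph {f : V → ℕ} {d : ℕ} (hf : ∀ v, f v ≤ d) (v : V) :
    (deg (layerGraph f) v : ℝ) = nbhdSize d (fun i => (layerSize f i : ℝ)) (f v) - 1 := by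
  have hnbhd : #{u | Near (f v) (f u)} = #{u | (layerGraph f).Adj v u} + 1 := by
    rw [← Finset.card_erase_add_one (s := univ.filter fun u => Near (f v) (f u)) (a := v)
      (Finset.mem_filter.2 ⟨mem_univ v, near_refl _⟩)]
    congr 2
    ext u
    rw [Finset.mem_erase, Finset.mem_filter, Finset.mem_filter]
    exact ⟨fun h => ⟨mem_univ u, h.1.symm, h.2.2⟩, fun h => ⟨h.2.1.symm, mem_univ u, h.2.2⟩⟩
  have hsum := sum_comp_eq_sum_layerSize hf fun i => if Near (f v) i then (1 : ℝ) else 0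
  simp only [smul_ite, nsmul_eq_mul, mul_one, smul_zero, ← natCast_card_filter] at hsum
  rw [deg, nbhdSize, ← hsum, hnbhd]
  push_cast
  ring

theorem cei_layerGraph {f : V → ℕ} {d : ℕ} (hf : Set.range f = Set.Iic d) (hd : 0 < d) :
    cei (layerGraph f) = profileCei d (fun i => (layerSize f i : ℝ)) := by
  have hfd := apply_le_of_range_eq_Iic hf
  have hterm : ∀ v, (deg (layerGraph f) v : ℝ) / ecc (layerGraph f) v
      = eccWeight d (f v) * (nbhdSize d (fun i => (layerSize f i : ℝ)) (f v) - 1) := by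
    intro v
    rw [deg_layerGraph hfd, ecc_layerGraph hf hd, eccWeight, div_eq_inv_mul]
  rw [cei, sum_congr rfl fun v _ => hterm v, sum_comp_eq_sum_layerSize hfd
    fun i => eccWeight d i * (nbhdSize d (fun i => (layerSize f i : ℝ)) i - 1), profileCei]
  simp only [nsmul_eq_mul]
  exact sum_congr rfl fun i _ => by ring

theorem nonempty_iso_layerGraph {W : Type*} [Fintype W] {f : V → ℕ} {g : W → ℕ}
    (h : ∀ i, layerSize f i = layerSize g i) : Nonempty (layerGraph f ≃g layerGraph g) := by
  let e : V ≃ W := Equiv.ofFiberEquiv (f := f) (g := g) fun i =>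
    Fintype.equivOfCardEq (by rw [Fintype.card_subtype, Fintype.card_subtype]; exact h i)
  refine ⟨⟨e, fun {u v} => ?_⟩⟩
  change (e u ≠ e v ∧ Near (g (e u)) (g (e v))) ↔ (u ≠ v ∧ Near (f u) (f v))
  have hmap : ∀ a, g (e a) = f a := Equiv.ofFiberEquiv_map _
  rw [hmap, hmap, e.injective.ne_iff]

theorem KConnected.mono {k : ℕ} {G H : SimpleGraph V} (hle : G ≤ H) (hG : KConnected k G) :
    KConnected k H := fun A hA =>
  ⟨(hG A hA).1.mono fun _ _ h => hle h, (hG A hA).2⟩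

theorem KConnected.connected {k : ℕ} {G : SimpleGraph V} (hk : 1 ≤ k) (hG : KConnected k G) :
    G.Connected := by
  have h := (hG ∅ (by rw [card_empty]; omega)).1
  rw [coe_empty, Set.compl_empty] at h
  exact (SimpleGraph.induceUnivIso G).connected_iff.1 h

theorem layerGraph_kConnected {f : V → ℕ} {d k : ℕ} (hf : Set.range f = Set.Iic d)
    (hmid : ∀ i, 0 < i → i < d → k ≤ layerSize f i) (hcard : k < Fintype.card V) :
    KConnected k (layerGraph f) := by
  intro A hA
  have hncard : ((A : Set V)ᶜ).ncard = Fintype.card V - #A := by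
    rw [Set.ncard_compl, Set.ncard_coe_finset, Nat.card_eq_fintype_card]
  refine ⟨?_, by omega⟩
  have : Nonempty ((A : Set V)ᶜ : Set V) :=
    (Set.nonempty_of_ncard_ne_zero (by omega)).to_subtype
  rw [induce_layerGraph, SimpleGraph.connected_iff]
  -- no inner layer lies inside `A`, so the surviving layer indices form an interval
  refine ⟨layerGraph_reachable ⟨?_⟩, inferInstance⟩
  rintro _ ⟨u, rfl⟩ _ ⟨w, rfl⟩ i ⟨hui, hiw⟩
  dsimp only at hui hiw
  have := apply_le_of_range_eq_Iic hf (w : V)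
  rcases eq_or_ne i (f u) with rfl | hu
  · exact ⟨u, rfl⟩
  rcases eq_or_ne i (f w) with rfl | hw
  · exact ⟨w, rfl⟩
  obtain ⟨x, hx, hxA⟩ := exists_mem_notMem_of_card_lt_card
    (hA.trans_le (hmid i (by omega) (by omega)))
  exact ⟨⟨x, hxA⟩, (Finset.mem_filter.1 hx).2⟩

theorem le_layerSize_of_kConnected {f : V → ℕ} {d k i : ℕ} (hconn : KConnected k (layerGraph f))
    (hf : Set.range f = Set.Iic d) (hi : 0 < i) (hid : i < d) : k ≤ layerSize f i := by
  by_contra! hlt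
  obtain ⟨u₀, hu₀⟩ := exists_apply_eq_of_range_eq_Iic hf (Nat.zero_le d)
  obtain ⟨u₁, hu₁⟩ := exists_apply_eq_of_range_eq_Iic hf le_rfl
  set A : Finset V := univ.filter fun v => f v = i
  have hA : ∀ {v}, v ∈ (A : Set V)ᶜ ↔ f v ≠ i := by simp [A]
  obtain ⟨p⟩ := (hconn A hlt).1.preconnected ⟨u₀, hA.2 (by omega)⟩ ⟨u₁, hA.2 (by omega)⟩
  obtain ⟨w, hw, hwi⟩ := exists_mem_support_layer_eq
    (p.map (SimpleGraph.Embedding.induce _).toHom) (i := i) (by simp [hu₀])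
    (by simpa [hu₁] using hid.le)
  rw [SimpleGraph.Walk.support_map, List.mem_map] at hw
  obtain ⟨a, -, rfl⟩ := hw
  exact hA.1 a.2 hwi

end LayerGraph

section Extremal

variable {V : Type*} [Fintype V]

theorem exists_ecc_eq_diam [Nonempty V] (G : SimpleGraph V) : ∃ x, ecc G x = diam G :=
  let ⟨x, _, hx⟩ := exists_mem_eq_sup univ univ_nonempty fun v => ecc G v
  ⟨x, hx.symm⟩

theorem exists_dist_eq_ecc [Nonempty V] (G : SimpleGraph V) (x : V) : ∃ z, G.dist x z = ecc G x :=
  let ⟨z, _, hz⟩ := exists_mem_eq_sup univ univ_nonempty fun u => G.dist x u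
  ⟨z, hz.symm⟩

theorem range_dist_eq_Iic {G : SimpleGraph V} (hG : G.Connected) {x₀ : V} {d : ℕ}
    (hx₀ : ecc G x₀ = d) : Set.range (G.dist x₀) = Set.Iic d := by
  have : Nonempty V := hG.nonempty
  obtain ⟨z, hz⟩ := exists_dist_eq_ecc G x₀
  ext i
  refine ⟨by rintro ⟨v, rfl⟩; exact hx₀ ▸ Set.mem_Iic.2 (Finset.le_sup (mem_univ v)), fun hi => ?_⟩
  obtain ⟨w, -, hw⟩ := exists_mem_support_layer_eq
    ((hG x₀ z).some.mapLe (le_layerGraph_dist G x₀)) (i := i) (by simp) (by rw [hz, hx₀]; exact hi)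
  exact ⟨w, hw⟩

theorem eq_of_le_of_cei_le {G H : SimpleGraph V} (hle : G ≤ H) (hecc : ∀ v, ecc H v ≤ ecc G v)
    (hpos : ∀ v, 0 < ecc H v) (hcei : cei H ≤ cei G) : G = H := by
  have hsub : ∀ v, univ.filter (G.Adj v) ⊆ univ.filter (H.Adj v) := fun v u hu => by
    simp only [Finset.mem_filter, mem_univ, true_and] at hu ⊢
    exact hle hu
  have hdeg : ∀ v, deg G v ≤ deg H v := fun v => card_le_card (hsub v)
  have hterm : ∀ v, (deg G v : ℝ) / ecc G v ≤ deg H v / ecc H v := fun v =>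
    div_le_div₀ (by positivity) (by exact_mod_cast hdeg v) (by exact_mod_cast hpos v)
      (by exact_mod_cast hecc v)
  have heq : ∀ v, (deg G v : ℝ) / ecc G v = deg H v / ecc H v := fun v =>
    (sum_eq_sum_iff_of_le fun v _ => hterm v).1
      (le_antisymm (sum_le_sum fun v _ => hterm v) hcei) v (mem_univ v)
  have hdeg_eq : ∀ v, deg G v = deg H v := by
    intro v
    have hG : (0 : ℝ) < ecc G v := by exact_mod_cast (hpos v).trans_le (hecc v)
    have : (deg H v : ℝ) / ecc G v ≤ deg G v / ecc G v := by
      rw [heq]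
      exact div_le_div_of_nonneg_left (by positivity) (by exact_mod_cast hpos v)
        (by exact_mod_cast hecc v)
    exact le_antisymm (hdeg v) (by exact_mod_cast (div_le_div_iff_of_pos_right hG).1 this)
  ext u v
  refine ⟨fun h => hle h, fun h => ?_⟩
  have hv : v ∈ univ.filter (H.Adj u) := by simp [h]
  rw [← eq_of_subset_of_card_le (hsub u) (hdeg_eq u).ge] at hv
  simpa using hv

theorem exists_eq_layerGraph_of_isMax {G : SimpleGraph V} {d k : ℕ} (hk : 1 ≤ k) (hd : 0 < d)
    (hconn : KConnected k G) (hdiam : diam G = d)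
    (hmax : ∀ H : SimpleGraph V, KConnected k H → diam H = d → cei H ≤ cei G) :
    ∃ f : V → ℕ, Set.range f = Set.Iic d ∧ G = layerGraph f := by
  have hG := hconn.connected hk
  have : Nonempty V := hG.nonempty
  obtain ⟨x₀, hx₀⟩ := exists_ecc_eq_diam G
  obtain ⟨z, hz⟩ := exists_dist_eq_ecc G x₀
  rw [hdiam] at hx₀
  have hrange := range_dist_eq_Iic hG hx₀
  have hle := le_layerGraph_dist G x₀
  refine ⟨G.dist x₀, hrange, eq_of_le_of_cei_le hle (fun v => ?_) (fun v => ?_)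
    (hmax _ (hconn.mono hle) (diam_layerGraph hrange hd))⟩
  · have h₁ : G.dist v x₀ ≤ ecc G v := le_sup (mem_univ x₀)
    have h₂ : G.dist v z ≤ ecc G v := le_sup (mem_univ z)
    have h₃ := hG.dist_triangle (u := x₀) (v := v) (w := z)
    rw [SimpleGraph.dist_comm] at h₁
    rw [ecc_layerGraph hrange hd]
    omega
  · rw [ecc_layerGraph hrange hd]
    omega

theorem layerSize_update (f : V → ℕ) (v : V) (b i : ℕ) :
    layerSize (Function.update f v b) i
      = #{u ∈ univ.erase v | f u = i} + if i = b then 1 else 0 := by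
  simp only [layerSize, card_filter]
  rw [← add_sum_erase _ _ (mem_univ v), Function.update_self, add_comm, eq_comm]
  congr 1
  · exact sum_congr rfl fun u hu => by rw [Function.update_of_ne (ne_of_mem_erase hu)]
  · simp only [eq_comm]

theorem cei_lt_cei_update {f : V → ℕ} {d j : ℕ} {v : V} (hf : Set.range f = Set.Iic d)
    (hf' : Set.range (Function.update f v (j + 1)) = Set.Iic d) (hv : f v = j)
    (hj : 2 * j + 2 ≤ d) (hsize : 2 ≤ layerSize f j)
    (hprev : j = 0 ∨ layerSize f (j - 1) ≤ layerSize f (j + 2)) :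
    cei (layerGraph f) < cei (layerGraph (Function.update f v (j + 1))) := by
  set y : ℕ → ℝ := fun i => (#{u ∈ univ.erase v | f u = i} : ℕ)
  have hy : ∀ b, (fun i => (layerSize (Function.update f v b) i : ℝ)) = y + Pi.single b 1 :=
    fun b => funext fun i => by simp [y, layerSize_update, Pi.single_apply]
  have hself : Function.update f v j = f := hv ▸ Function.update_eq_self v f
  have hyf : ∀ i, i ≠ j → y i = layerSize f i := fun i hi => by
    simpa [hself, Pi.single_apply, hi] using (congrFun (hy j) i).symm
  have hyj : y j + 1 = layerSize f j := by
    simpa [hself] using (congrFun (hy j) j).symm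
  have hcei : cei (layerGraph f) = profileCei d (y + Pi.single j 1) := by
    rw [cei_layerGraph hf (by omega), ← hy j, hself]
  rw [hcei, cei_layerGraph hf' (by omega), hy, profileCei_add_single (by omega),
    profileCei_add_single (by omega)]
  refine (add_lt_add_iff_left _).2
    (insertGain_lt_insertGain_succ hj (fun _ => Nat.cast_nonneg _) ?_ ?_)
  · have : (2 : ℝ) ≤ layerSize f j := by exact_mod_cast hsize
    have : 0 ≤ y (j + 1) := Nat.cast_nonneg _
    linarith
  · refine or_iff_not_imp_left.2 fun hj0 => ?_
    rw [hyf _ (by omega), hyf _ (by omega)]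
    exact_mod_cast hprev.resolve_left hj0

theorem layerSize_le_of_isMax_of_prev_le {f : V → ℕ} {d k j : ℕ} (hk : 1 ≤ k)
    (hf : Set.range f = Set.Iic d) (hmid : ∀ i, 0 < i → i < d → k ≤ layerSize f i)
    (hcard : k < Fintype.card V)
    (hmax : ∀ H : SimpleGraph V, KConnected k H → diam H = d → cei H ≤ cei (layerGraph f))
    (hj : 2 * j + 2 ≤ d) (hprev : j = 0 ∨ layerSize f (j - 1) ≤ k) :
    layerSize f j ≤ if j = 0 then 1 else k := by
  by_contra! hbig
  have hpos : ∀ {i}, 0 < layerSize f i ↔ i ≤ d := by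
    intro i; rw [layerSize_pos_iff, hf, Set.mem_Iic]
  have htwo : 2 ≤ layerSize f j := by split_ifs at hbig <;> omega
  obtain ⟨v, hv⟩ : j ∈ Set.range f := layerSize_pos_iff.1 (by omega)
  set f' := Function.update f v (j + 1)
  have hsize : ∀ i, layerSize f' i + (if i = j then 1 else 0)
      = layerSize f i + if i = j + 1 then 1 else 0 := by
    intro i
    have h := layerSize_update f v j i
    rw [← hv, Function.update_eq_self, hv] at h
    rw [layerSize_update, h]
    omega
  have hf' : Set.range f' = Set.Iic d := by
    ext i
    rw [← layerSize_pos_iff, Set.mem_Iic, ← hpos]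
    have h := hsize i
    have := hpos.2 (show j + 1 ≤ d by omega)
    split_ifs at h <;> subst_vars <;> omega
  have hmid' : ∀ i, 0 < i → i < d → k ≤ layerSize f' i := by
    intro i hi hid
    have h := hsize i
    have := hmid i hi hid
    have : i = j → k < layerSize f j := fun hij => by simpa [← hij, hi.ne'] using hbig
    split_ifs at h <;> subst_vars <;> omega
  have hprev' : j = 0 ∨ layerSize f (j - 1) ≤ layerSize f (j + 2) :=
    or_iff_not_imp_left.2 fun hj0 => (hprev.resolve_left hj0).trans (hmid _ (by omega) (by omega))
  exact (hmax _ (layerGraph_kConnected hf' hmid' hcard) (diam_layerGraph hf' (by omega))).not_gt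
    (cei_lt_cei_update hf hf' hv hj htwo hprev')

theorem layerSize_le_of_isMax {f : V → ℕ} {d k : ℕ} (hk : 1 ≤ k) (hf : Set.range f = Set.Iic d)
    (hconn : KConnected k (layerGraph f)) (hcard : k < Fintype.card V)
    (hmax : ∀ H : SimpleGraph V, KConnected k H → diam H = d → cei H ≤ cei (layerGraph f))
    (j : ℕ) (hj : 2 * j + 2 ≤ d) : layerSize f j ≤ if j = 0 then 1 else k := by
  have hmid : ∀ i, 0 < i → i < d → k ≤ layerSize f i := fun _ =>
    le_layerSize_of_kConnected hconn hf
  induction j with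
  | zero => exact layerSize_le_of_isMax_of_prev_le hk hf hmid hcard hmax hj (Or.inl rfl)
  | succ j ih =>
    refine layerSize_le_of_isMax_of_prev_le hk hf hmid hcard hmax hj (Or.inr ?_)
    have := ih (by omega)
    rw [Nat.add_sub_cancel]
    split_ifs at this <;> omega

end Extremal

theorem sum_range_getD (L : List ℕ) : ∑ i ∈ range L.length, L.getD i 0 = L.sum := by
  induction L with
  | nil => simp
  | cons a l ih =>
    rw [List.length_cons, sum_range_succ', List.sum_cons, ← ih]
    simp only [List.getD_cons_succ, List.getD_cons_zero]
    ring

theorem eq_of_sum_eq_of_forall_ne {s : Finset ℕ} {x y : ℕ → ℕ} {c : ℕ} (hc : c ∈ s)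
    (h : ∀ i ∈ s, i ≠ c → x i = y i) (hsum : ∑ i ∈ s, x i = ∑ i ∈ s, y i) : x c = y c := by
  have hx := add_sum_erase s (fun i => x i) hc
  have hy := add_sum_erase s (fun i => y i) hc
  have hrest : ∑ i ∈ s.erase c, x i = ∑ i ∈ s.erase c, y i :=
    sum_congr rfl fun i hi => h i (mem_of_mem_erase hi) (ne_of_mem_erase hi)
  omega

theorem layerSize_fst (L : List ℕ) (i : ℕ) :
    layerSize (fun x : (j : Fin L.length) × Fin (L.get j) => x.1.val) i = L.getD i 0 := by
  have hfiber : ∀ a : Fin L.length, (∑ _b : Fin (L.get a), if a.val = i then 1 else 0)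
      = if a.val = i then L.getD a.val 0 else 0 := by
    intro a
    split_ifs <;> simp
  rw [layerSize, card_filter, Fintype.sum_sigma, sum_congr rfl fun a _ => hfiber a,
    Fin.sum_univ_eq_sum_range (fun j => if j = i then L.getD j 0 else 0), sum_ite_eq']
  split_ifs with h
  · rfl
  · rw [List.getD_eq_default _ _ (by simpa using h)]

theorem seqCompleteJoin_eq_layerGraph (L : List ℕ) :
    seqCompleteJoin L = layerGraph fun x : (j : Fin L.length) × Fin (L.get j) => x.1.val :=
  rfl

def targetList (k d n : ℕ) : List ℕ :=
  [1] ++ List.replicate ((d - 2) / 2) k ++ [n + 2 * k - k * d - 2] ++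
    List.replicate ((d - 2) / 2) k ++ [1]

theorem length_targetList {k d n : ℕ} (hd : 2 ≤ d) (hde : Even d) :
    (targetList k d n).length = d + 1 := by
  obtain ⟨m, rfl⟩ := hde
  simp only [targetList, List.length_append, List.length_replicate, List.length_singleton]
  omega

theorem sum_targetList {k d n : ℕ} (hd : 2 ≤ d) (hde : Even d) (hn : k * (d - 1) + 2 ≤ n) :
    (targetList k d n).sum = n := by
  obtain ⟨m, rfl⟩ : ∃ m, d = 2 * m + 2 := ⟨(d - 2) / 2, by rcases hde with ⟨r, rfl⟩; omega⟩
  simp only [targetList, List.sum_append, List.sum_replicate, List.sum_singleton, smul_eq_mul,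
    show (2 * m + 2 - 2) / 2 = m by omega, show 2 * m + 2 - 1 = 2 * m + 1 by omega] at hn ⊢
  have : k * (2 * m + 2) = 2 * (m * k) + 2 * k := by ring
  have : k * (2 * m + 1) = 2 * (m * k) + k := by ring
  omega

theorem getD_targetList {k d n i : ℕ} (hd : 2 ≤ d) (hde : Even d) :
    (targetList k d n).getD i 0 = if i = 0 ∨ i = d then 1
      else if i = d / 2 then n + 2 * k - k * d - 2 else if i < d then k else 0 := by
  obtain ⟨m, rfl⟩ : ∃ m, d = 2 * m + 2 := ⟨(d - 2) / 2, by rcases hde with ⟨r, rfl⟩; omega⟩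
  simp only [targetList, List.getD_eq_getElem?_getD, List.getElem?_append, List.getElem?_replicate,
    List.length_append, List.length_replicate, List.length_singleton, List.getElem?_singleton,
    show (2 * m + 2 - 2) / 2 = m by omega, show (2 * m + 2) / 2 = m + 1 by omega]
  split_ifs <;> first | omega | simp_all

theorem eq_getD_targetList {x : ℕ → ℕ} {k d n : ℕ} (hd : 2 ≤ d) (hde : Even d)
    (hn : k * (d - 1) + 2 ≤ n) (hpos : ∀ i, 0 < x i ↔ i ≤ d) (hsum : ∑ i ∈ range (d + 1), x i = n)
    (hmid : ∀ i, 0 < i → i < d → k ≤ x i)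
    (hleft : ∀ j, 2 * j + 2 ≤ d → x j ≤ if j = 0 then 1 else k)
    (hright : ∀ j, 2 * j + 2 ≤ d → x (d - j) ≤ if j = 0 then 1 else k) (i : ℕ) :
    x i = (targetList k d n).getD i 0 := by
  have hoff : ∀ i, i ≠ d / 2 → x i = (targetList k d n).getD i 0 := by
    intro i hi
    rw [getD_targetList hd hde]
    obtain ⟨m, rfl⟩ := hde
    have := hpos i
    by_cases hid : i ≤ m + m
    · have := hleft i
      have := hright (m + m - i)
      have := hmid i
      rw [Nat.sub_sub_self hid] at *
      split_ifs at * <;> omega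
    · split_ifs <;> omega
  by_cases hi : i = d / 2
  · subst hi
    refine eq_of_sum_eq_of_forall_ne (s := range (d + 1)) (mem_range.2 (by omega))
      (fun i _ hi => hoff i hi) ?_
    rw [hsum, ← length_targetList (k := k) (n := n) hd hde, sum_range_getD,
      sum_targetList hd hde hn]
  · exact hoff i hi


/-- for even diameter `d ≥ 4`, the maximizer of the CEI among
`k`-connected graphs of order `n` with diameter `d` is the sequential join
`K_1 ∨ [(d-2)/2]K_k ∨ K_{n-kd+2k-2} ∨ [(d-2)/2]K_k ∨ K_1`. -/
theorem extremal_even_diam {U : Type} [Fintype U] (G : SimpleGraph U) (k d n : ℕ)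
    (hk : 1 ≤ k) (hd : 4 ≤ d) (hde : Even d) (hn : k * (d - 1) + 2 ≤ n)
    (hcard : Fintype.card U = n) (hconn : KConnected k G) (hdiam : diam G = d)
    (hmax : ∀ (W : Type) [Fintype W] (H : SimpleGraph W),
      Fintype.card W = n → KConnected k H → diam H = d → cei H ≤ cei G) :
    Nonempty (G ≃g seqCompleteJoin
      ([1] ++ List.replicate ((d - 2) / 2) k ++ [n + 2 * k - k * d - 2] ++
        List.replicate ((d - 2) / 2) k ++ [1])) := by
  have hmaxU := fun H => hmax U H hcard
  obtain ⟨ℓ, hℓ, rfl⟩ := exists_eq_layerGraph_of_isMax hk (by omega) hconn hdiam hmaxU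
  have hkU : k < Fintype.card U := by
    have := Nat.le_mul_of_pos_right k (show 0 < d - 1 by omega)
    omega
  have hℓd := apply_le_of_range_eq_Iic hℓ
  have hrefl := layerGraph_reflect hℓd
  rw [seqCompleteJoin_eq_layerGraph]
  refine nonempty_iso_layerGraph fun i => ?_
  rw [layerSize_fst]
  refine eq_getD_targetList (by omega) hde hn
    (fun i => by rw [layerSize_pos_iff, hℓ, Set.mem_Iic]) (by rw [sum_layerSize hℓd, hcard])
    (fun i => le_layerSize_of_kConnected hconn hℓ) (layerSize_le_of_isMax hk hℓ hconn hkU hmaxU)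
    (fun j hj => ?_) i
  rw [← layerSize_reflect hℓd (by omega)]
  exact layerSize_le_of_isMax hk (range_reflect hℓ) (hrefl ▸ hconn) hkU (hrefl ▸ hmaxU) j hj

end CEI
end

section
/- Let k ≥ 1, let d ≥ 3 be odd, and let n ≥ k(d-1)+2. Any two graphs in the family H(n,k,d) have equal connective eccentricity index; that is, for any s, t, s', t' ≥ k-1 with s + t = s' + t' = n - kd + 3k - 4, the graphs K_1 ∨ [(d-3)/2]K_k ∨ K_{s+1} ∨ K_{t+1} ∨ [(d-3)/2]K_k ∨ K_1 and K_1 ∨ [(d-3)/2]K_k ∨ K_{s'+1} ∨ K_{t'+1} ∨ [(d-3)/2]K_k ∨ K_1 have the same connective eccentricity index. -/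
open Finset
open scoped Classical

namespace CEI

variable {V : Type*}

/-!
In a sequential join of nonempty cliques `K_{c_0} ∨ ⋯ ∨ K_{c_{L-1}}` a walk moves at most one
part per step, so a vertex of part `i` is at distance `max |i - j| 1` from the other vertices of
part `j`. Hence its eccentricity is `max i (L - 1 - i)`, its degree is
`c_{i-1} + c_i + c_{i+1} - 1`, and the index is a sum of one term per part. In
`K_1 ∨ [m]K_k ∨ K_x ∨ K_y ∨ [m]K_k ∨ K_1` only the four central parts `K_a ∨ K_x ∨ K_y ∨ K_a`
(`a = k`, or `a = 1` if `m = 0`) see `x` and `y`; the middle two have eccentricity `m + 2`, the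
outer two `m + 3`, and their terms add up to
`a (u + v + 2a + x + y - 2) / (m + 3) + (x + y) (a + x + y - 1) / (m + 2)`, with `u`, `v` the
sizes of the parts next to the block. This depends on `x` and `y` only through `x + y`.
-/

lemma sum_getD_eq_sum_get (cs : List ℕ) (W : Finset ℕ) :
    ∑ j ∈ W, cs.getD j 0 = ∑ i : Fin cs.length with i.val ∈ W, cs.get i := by
  rw [← sum_filter_of_ne (p := (· < cs.length)) fun j _ h => by
    by_contra hj; exact h (List.getD_eq_default _ _ (by omega))]
  refine (sum_bij (fun i _ => i.val) (by simp) (fun _ _ _ _ => Fin.ext)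
    (fun j hj => ?_) (fun i _ => ?_)).symm
  · simp only [mem_filter] at hj
    exact ⟨⟨j, hj.2⟩, by simp [hj.1], rfl⟩
  · simp

section SeqCompleteJoin

variable {cs : List ℕ}

lemma seqCompleteJoin_adj {x y : Σ i : Fin cs.length, Fin (cs.get i)} :
    (seqCompleteJoin cs).Adj x y ↔
      x ≠ y ∧ (x.1.val = y.1.val ∨ x.1.val + 1 = y.1.val ∨ y.1.val + 1 = x.1.val) :=
  Iff.rfl

lemma fst_le_fst_add_length {x y : Σ i : Fin cs.length, Fin (cs.get i)}
    (w : (seqCompleteJoin cs).Walk x y) : y.1.val ≤ x.1.val + w.length := by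
  induction w with
  | nil => simp
  | cons h _ ih =>
    have := (seqCompleteJoin_adj.1 h).2
    rw [SimpleGraph.Walk.length_cons]
    omega

lemma exists_walk_length_eq_fst_sub (hpos : ∀ c ∈ cs, 0 < c) :
    ∀ (n : ℕ) (x y : Σ i : Fin cs.length, Fin (cs.get i)), x.1.val + n + 1 = y.1.val →
      ∃ w : (seqCompleteJoin cs).Walk x y, w.length = n + 1
  | 0, x, y, h =>
    ⟨.cons (seqCompleteJoin_adj.2 ⟨ne_of_apply_ne (fun v => v.1.val) (by omega), by omega⟩)
      .nil, rfl⟩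
  | n + 1, x, y, h => by
    let z : Σ i : Fin cs.length, Fin (cs.get i) :=
      ⟨⟨x.1.val + 1, by omega⟩, ⟨0, hpos _ (List.get_mem _ _)⟩⟩
    obtain ⟨w, hw⟩ := exists_walk_length_eq_fst_sub hpos n z y (by simp only [z]; omega)
    have hxz : (seqCompleteJoin cs).Adj x z :=
      seqCompleteJoin_adj.2 ⟨ne_of_apply_ne (fun v => v.1.val) (by simp [z]), by simp [z]⟩
    exact ⟨.cons hxz w, by simp [hw]⟩

lemma exists_walk_length_le (hpos : ∀ c ∈ cs, 0 < c)
    (x y : Σ i : Fin cs.length, Fin (cs.get i)) :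
    ∃ w : (seqCompleteJoin cs).Walk x y, w.length ≤ max (Nat.dist x.1.val y.1.val) 1 := by
  rcases lt_trichotomy x.1.val y.1.val with hlt | heq | hgt
  · obtain ⟨w, hw⟩ := exists_walk_length_eq_fst_sub hpos (y.1.val - x.1.val - 1) x y (by omega)
    exact ⟨w, by unfold Nat.dist; omega⟩
  · by_cases hxy : x = y
    · subst hxy
      exact ⟨.nil, by simp⟩
    · exact ⟨.cons (seqCompleteJoin_adj.2 ⟨hxy, Or.inl heq⟩) .nil, by simp⟩
  · obtain ⟨w, hw⟩ := exists_walk_length_eq_fst_sub hpos (x.1.val - y.1.val - 1) y x (by omega)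
    exact ⟨w.reverse, by rw [SimpleGraph.Walk.length_reverse]; unfold Nat.dist; omega⟩

lemma fst_le_fst_add_dist (hpos : ∀ c ∈ cs, 0 < c)
    (x y : Σ i : Fin cs.length, Fin (cs.get i)) :
    y.1.val ≤ x.1.val + (seqCompleteJoin cs).dist x y := by
  obtain ⟨w₀, -⟩ := exists_walk_length_le hpos x y
  obtain ⟨w, hw⟩ := SimpleGraph.Reachable.exists_walk_length_eq_dist ⟨w₀⟩
  exact hw ▸ fst_le_fst_add_length w

lemma ecc_seqCompleteJoin (hpos : ∀ c ∈ cs, 0 < c) (hlen : 2 ≤ cs.length)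
    (v : Σ i : Fin cs.length, Fin (cs.get i)) :
    ecc (seqCompleteJoin cs) v = max v.1.val (cs.length - 1 - v.1.val) := by
  have hv := v.1.isLt
  refine le_antisymm (Finset.sup_le fun u _ => ?_) (max_le ?_ ?_)
  · obtain ⟨w, hw⟩ := exists_walk_length_le hpos v u
    have := (SimpleGraph.dist_le w).trans hw
    have := u.1.isLt
    unfold Nat.dist at *
    omega
  · let u : Σ i : Fin cs.length, Fin (cs.get i) :=
      ⟨⟨0, by omega⟩, ⟨0, hpos _ (List.get_mem _ _)⟩⟩
    have : v.1.val ≤ 0 + (seqCompleteJoin cs).dist u v := fst_le_fst_add_dist hpos u v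
    rw [SimpleGraph.dist_comm] at this
    exact le_trans (by omega) (Finset.le_sup (mem_univ u))
  · let u : Σ i : Fin cs.length, Fin (cs.get i) :=
      ⟨⟨cs.length - 1, by omega⟩, ⟨0, hpos _ (List.get_mem _ _)⟩⟩
    have : cs.length - 1 ≤ v.1.val + (seqCompleteJoin cs).dist v u :=
      fst_le_fst_add_dist hpos v u
    exact le_trans (by omega) (Finset.le_sup (mem_univ u))

lemma deg_seqCompleteJoin_add_one (v : Σ i : Fin cs.length, Fin (cs.get i)) :
    deg (seqCompleteJoin cs) v + 1 = ∑ j ∈ Ico (v.1.val - 1) (v.1.val + 2), cs.getD j 0 := by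
  set W := Ico (v.1.val - 1) (v.1.val + 2)
  have hnbhd : univ.filter (fun u => (seqCompleteJoin cs).Adj v u) =
      (univ.filter fun u : Σ i : Fin cs.length, Fin (cs.get i) => u.1.val ∈ W).erase v := by
    ext u
    simp only [mem_filter, mem_erase, mem_univ, true_and, seqCompleteJoin_adj, W, mem_Ico]
    constructor <;> rintro ⟨hne, h⟩ <;> exact ⟨Ne.symm hne, by omega⟩
  have hparts : (univ.filter fun u : Σ i : Fin cs.length, Fin (cs.get i) => u.1.val ∈ W) =
      (univ.filter fun i : Fin cs.length => i.val ∈ W).sigma fun _ => univ := by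
    ext u
    simp
  rw [deg, hnbhd, card_erase_of_mem (by simp [W]), hparts, card_sigma,
    sum_getD_eq_sum_get]
  simp only [card_univ, Fintype.card_fin]
  have : 0 < cs.get v.1 := Fin.pos v.2
  have : cs.get v.1 ≤ ∑ i : Fin cs.length with i.val ∈ W, cs.get i :=
    single_le_sum (f := cs.get) (fun _ _ => Nat.zero_le _) (by simp [W])
  omega

/-- `c i` times the common value of `deg v / ecc v` on part `i` of the sequential join of cliques of
sizes `c 0, …, c (L - 1)`. Truncated subtraction makes the window `Ico (i - 1) (i + 2)` equal to
`{0, 1}` at `i = 0`. -/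
noncomputable def partTerm (c : ℕ → ℕ) (L i : ℕ) : ℝ :=
  c i * (((∑ j ∈ Ico (i - 1) (i + 2), c j : ℕ) : ℝ) - 1) / (max i (L - 1 - i) : ℕ)

lemma cei_seqCompleteJoin (hpos : ∀ c ∈ cs, 0 < c) (hlen : 2 ≤ cs.length) :
    cei (seqCompleteJoin cs) = ∑ i ∈ range cs.length, partTerm (cs.getD · 0) cs.length i := by
  rw [cei, ← univ_sigma_univ, sum_sigma, ← Fin.sum_univ_eq_sum_range]
  refine sum_congr rfl fun i _ => ?_
  have hvertex : ∀ a : Fin (cs.get i),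
      (deg (seqCompleteJoin cs) ⟨i, a⟩ : ℝ) / ecc (seqCompleteJoin cs) ⟨i, a⟩ =
        (((∑ j ∈ Ico (i.val - 1) (i.val + 2), cs.getD j 0 : ℕ) : ℝ) - 1) /
          (max i.val (cs.length - 1 - i.val) : ℕ) := by
    intro a
    rw [ecc_seqCompleteJoin hpos hlen, ← deg_seqCompleteJoin_add_one ⟨i, a⟩]
    push_cast
    ring
  rw [sum_congr rfl fun a _ => hvertex a, sum_const, card_univ, Fintype.card_fin, nsmul_eq_mul,
    partTerm, List.getD_eq_getElem _ _ i.isLt, mul_div_assoc]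
  rfl

end SeqCompleteJoin

lemma partTerm_congr {c c' : ℕ → ℕ} {L i : ℕ}
    (h : ∀ j ∈ Ico (i - 1) (i + 2), c j = c' j) :
    partTerm c L i = partTerm c' L i := by
  rw [partTerm, partTerm, h i (by simp), sum_congr rfl h]

lemma sum_Ico_window_add_one (c : ℕ → ℕ) (i : ℕ) :
    ∑ j ∈ Ico (i + 1 - 1) (i + 1 + 2), c j = c i + c (i + 1) + c (i + 2) := by
  simp [sum_Ico_succ_top, add_assoc]

section Block

variable {c c' : ℕ → ℕ} {p : ℕ}

lemma sum_Ico_partTerm_block_eq (hc : ∀ j, j ≠ p + 1 → j ≠ p + 2 → c j = c' j)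
    (hsym : c p = c (p + 3)) (hsum : c (p + 1) + c (p + 2) = c' (p + 1) + c' (p + 2)) :
    ∑ i ∈ Ico p (p + 4), partTerm c (2 * p + 4) i =
      ∑ i ∈ Ico p (p + 4), partTerm c' (2 * p + 4) i := by
  have hleft : ∀ c : ℕ → ℕ, ∑ j ∈ Ico (p - 1) (p + 2), c j =
      ∑ j ∈ Ico (p - 1) p, c j + c p + c (p + 1) := by
    intro c
    rw [sum_Ico_succ_top (by omega), sum_Ico_succ_top (by omega)]
  have hout : ∑ j ∈ Ico (p - 1) p, c j = ∑ j ∈ Ico (p - 1) p, c' j :=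
    sum_congr rfl fun j hj => by simp only [mem_Ico] at hj; exact hc j (by omega) (by omega)
  have hsumR : (c (p + 1) : ℝ) + c (p + 2) = c' (p + 1) + c' (p + 2) := by exact_mod_cast hsum
  -- `p + 1 + 1` rather than `p + 2`, so that `sum_Ico_window_add_one` matches the windows
  have hfour : ∀ f : ℕ → ℝ,
      ∑ i ∈ Ico p (p + 4), f i = f p + f (p + 1) + f (p + 1 + 1) + f (p + 1 + 1 + 1) := by
    intro f
    simp [sum_Ico_succ_top, add_assoc]
  simp only [hfour, partTerm, hleft, sum_Ico_window_add_one]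
  simp only [Nat.add_assoc, Nat.reduceAdd]
  rw [show max p (2 * p + 4 - 1 - p) = p + 3 by omega,
    show max (p + 1) (2 * p + 4 - 1 - (p + 1)) = p + 2 by omega,
    show max (p + 2) (2 * p + 4 - 1 - (p + 2)) = p + 2 by omega,
    show max (p + 3) (2 * p + 4 - 1 - (p + 3)) = p + 3 by omega,
    ← hout, ← hc p (by omega) (by omega), ← hc (p + 3) (by omega) (by omega),
    ← hc (p + 4) (by omega) (by omega), ← hsym]
  push_cast
  linear_combination
    ((c p : ℝ) / (p + 3) +
      (c p + c (p + 1) + c (p + 2) + c' (p + 1) + c' (p + 2) - 1) / (p + 2)) * hsumR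

lemma sum_range_partTerm_block_eq (hc : ∀ j, j ≠ p + 1 → j ≠ p + 2 → c j = c' j)
    (hsym : c p = c (p + 3)) (hsum : c (p + 1) + c (p + 2) = c' (p + 1) + c' (p + 2)) :
    ∑ i ∈ range (2 * p + 4), partTerm c (2 * p + 4) i =
      ∑ i ∈ range (2 * p + 4), partTerm c' (2 * p + 4) i := by
  have hsplit : ∀ f : ℕ → ℝ, ∑ i ∈ range (2 * p + 4), f i =
      ∑ i ∈ range p, f i + ∑ i ∈ Ico p (p + 4), f i +
        ∑ i ∈ Ico (p + 4) (2 * p + 4), f i := by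
    intro f
    rw [add_assoc, sum_Ico_consecutive _ (by omega) (by omega), sum_range_add_sum_Ico _ (by omega)]
  have hout : ∀ i, i < p ∨ p + 4 ≤ i →
      partTerm c (2 * p + 4) i = partTerm c' (2 * p + 4) i :=
    fun i hi => partTerm_congr fun j hj => by
      simp only [mem_Ico] at hj
      exact hc j (by omega) (by omega)
  rw [hsplit, hsplit, sum_Ico_partTerm_block_eq hc hsym hsum,
    sum_congr rfl fun i hi => hout i (.inl (mem_range.1 hi)),
    sum_congr rfl fun i hi => hout i (.inr (mem_Ico.1 hi).1)]

end Block

lemma getD_block_eq_of_ne {A B : List ℕ} {a x y x' y' j : ℕ} (h1 : j ≠ A.length + 1)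
    (h2 : j ≠ A.length + 2) :
    (A ++ [a, x, y, a] ++ B).getD j 0 = (A ++ [a, x', y', a] ++ B).getD j 0 := by
  grind [List.getD_append, List.getD_append_right]

theorem cei_block_eq {A B : List ℕ} {a x y x' y' : ℕ} (hAB : A.length = B.length)
    (hpos : ∀ c ∈ A ++ [a, x, y, a] ++ B, 0 < c)
    (hpos' : ∀ c ∈ A ++ [a, x', y', a] ++ B, 0 < c)
    (hxy : x + y = x' + y') :
    cei (seqCompleteJoin (A ++ [a, x, y, a] ++ B)) =
      cei (seqCompleteJoin (A ++ [a, x', y', a] ++ B)) := by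
  have hlen : ∀ x y, (A ++ [a, x, y, a] ++ B).length = 2 * A.length + 4 := by
    intro x y
    simp only [List.length_append, List.length_cons, List.length_nil]
    omega
  rw [cei_seqCompleteJoin hpos (by rw [hlen]; omega),
    cei_seqCompleteJoin hpos' (by rw [hlen]; omega), hlen, hlen]
  exact sum_range_partTerm_block_eq (fun _ => getD_block_eq_of_ne)
    (by simp [List.getD_eq_getElem?_getD]) (by simpa [List.getD_eq_getElem?_getD] using hxy)

lemma exists_block_decomposition (m k : ℕ) (hk : 0 < k) :
    ∃ A a B, A.length = B.length ∧ (∀ c ∈ A ++ a :: B, 0 < c) ∧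
      ∀ x y : ℕ, [1] ++ List.replicate m k ++ [x, y] ++ List.replicate m k ++ [1] =
        A ++ [a, x, y, a] ++ B := by
  rcases m with _ | m
  · exact ⟨[], 1, [], rfl, by simp, by simp⟩
  · refine ⟨[1] ++ List.replicate m k, k, List.replicate m k ++ [1], by simp, ?_, ?_⟩
    · intro c hc
      simp only [List.cons_append, List.nil_append, List.mem_cons, List.mem_append,
        List.mem_replicate, List.not_mem_nil, or_false] at hc
      omega
    · have hcomm : List.replicate m k ++ [k] = k :: List.replicate m k := by
        rw [← List.replicate_succ', List.replicate_succ]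
      intro x y
      rw [List.replicate_succ']
      nth_rw 2 [hcomm]
      simp

theorem cei_eq_of_mem_H_general (k d n s t s' t' : ℕ)
    (hk : 1 ≤ k)
    (hst : s + t + k * d + 4 = n + 3 * k) (hst' : s' + t' + k * d + 4 = n + 3 * k) :
    cei (seqCompleteJoin ([1] ++ List.replicate ((d - 3) / 2) k ++ [s + 1, t + 1] ++
        List.replicate ((d - 3) / 2) k ++ [1])) =
    cei (seqCompleteJoin ([1] ++ List.replicate ((d - 3) / 2) k ++ [s' + 1, t' + 1] ++
        List.replicate ((d - 3) / 2) k ++ [1])) := by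
  obtain ⟨A, a, B, hAB, hpos, hlist⟩ := exists_block_decomposition ((d - 3) / 2) k hk
  have hblock : ∀ x y, ∀ c ∈ A ++ [a, x + 1, y + 1, a] ++ B, 0 < c := by
    intro x y c hc
    by_cases hxy : c = x + 1 ∨ c = y + 1
    · omega
    · simp only [List.append_assoc, List.cons_append, List.nil_append, List.mem_append,
        List.mem_cons] at hc
      exact hpos c (by simp only [List.mem_append, List.mem_cons]; tauto)
  rw [hlist, hlist]
  exact cei_block_eq hAB (hblock s t) (hblock s' t') (by omega)

/-- all graphs in the family `H(n,k,d)` (for odd `d ≥ 3`) have the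
same connective eccentricity index. -/
theorem cei_eq_of_mem_H (k d n s t s' t' : ℕ)
    (hk : 1 ≤ k) (hd : 3 ≤ d) (hdo : Odd d) (hn : k * (d - 1) + 2 ≤ n)
    (hs : k - 1 ≤ s) (ht : k - 1 ≤ t) (hs' : k - 1 ≤ s') (ht' : k - 1 ≤ t')
    (hst : s + t + k * d + 4 = n + 3 * k) (hst' : s' + t' + k * d + 4 = n + 3 * k) :
    cei (seqCompleteJoin ([1] ++ List.replicate ((d - 3) / 2) k ++ [s + 1, t + 1] ++
        List.replicate ((d - 3) / 2) k ++ [1])) =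
    cei (seqCompleteJoin ([1] ++ List.replicate ((d - 3) / 2) k ++ [s' + 1, t' + 1] ++
        List.replicate ((d - 3) / 2) k ++ [1])) :=
  cei_eq_of_mem_H_general k d n s t s' t' hk hst hst'

end CEI
end

section
/- Let k ≥ 1 and let a_1, a_2 be integers with 2 ≤ a_1 ≤ a_2. Then ξ^ce(K_k ∨ (K_{a_1} ∪ K_{a_2})) < ξ^ce(K_k ∨ (K_{a_1 - 1} ∪ K_{a_2 + 1})); indeed, ξ^ce(K_k ∨ (K_{a_1} ∪ K_{a_2})) - ξ^ce(K_k ∨ (K_{a_1 - 1} ∪ K_{a_2 + 1})) = a_1 - 1 - a_2. -/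
open Finset
open scoped Classical

namespace CEI

variable {V : Type*}

/-! The `k` apex vertices are adjacent to every other vertex, so they have eccentricity `1`, while
every other vertex has eccentricity `2`: it misses the other clique, and any apex vertex is a
common neighbour. Hence
`ξ^ce(K_k ∨ (K_a ∪ K_b)) = k (k + a + b - 1) + a (k + a - 1) / 2 + b (k + b - 1) / 2`,
and moving one vertex from `K_{a₁}` to `K_{a₂}` increases this by `a₂ + 1 - a₁ > 0`. -/

section Dominating

variable {G : SimpleGraph V} {c : V}

lemma reachable_of_forall_adj (hc : ∀ u, u ≠ c → G.Adj c u) (u : V) : G.Reachable u c := by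
  rcases eq_or_ne u c with rfl | hu
  · rfl
  · exact (hc u hu).symm.reachable

lemma dist_le_one_of_forall_adj (hc : ∀ u, u ≠ c → G.Adj c u) (u : V) : G.dist c u ≤ 1 := by
  rcases eq_or_ne u c with rfl | hu
  · simp
  · exact (SimpleGraph.dist_eq_one_iff_adj.2 (hc u hu)).le

lemma dist_le_two_of_forall_adj (hc : ∀ u, u ≠ c → G.Adj c u) (u w : V) : G.dist u w ≤ 2 :=
  calc G.dist u w ≤ G.dist u c + G.dist c w := (reachable_of_forall_adj hc u).dist_triangle_left w
    _ ≤ 1 + 1 := by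
      rw [SimpleGraph.dist_comm]
      gcongr <;> exact dist_le_one_of_forall_adj hc _

lemma dist_eq_two_of_forall_adj (hc : ∀ u, u ≠ c → G.Adj c u) {u w : V} (hne : u ≠ w)
    (hnadj : ¬ G.Adj u w) : G.dist u w = 2 := by
  have hpos := ((reachable_of_forall_adj hc u).trans
    (reachable_of_forall_adj hc w).symm).pos_dist_of_ne hne
  have hne_one : G.dist u w ≠ 1 := mt SimpleGraph.dist_eq_one_iff_adj.1 hnadj
  have := dist_le_two_of_forall_adj hc u w
  omega

variable [Fintype V]

lemma deg_eq_card_filter_sub_one {v : V} (P : V → Prop) [DecidablePred P]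
    (hadj : ∀ u, G.Adj v u ↔ u ≠ v ∧ P u)
    (hv : P v) : deg G v = #{u | P u} - 1 := by
  have : ({u | G.Adj v u} : Finset V) = ({u | P u} : Finset V).erase v := by
    ext u; simp [hadj]
  rw [deg, this, card_erase_of_mem (by simpa using hv)]

lemma ecc_eq_one {w : V} (hc : ∀ u, u ≠ c → G.Adj c u) (hw : w ≠ c) : ecc G c = 1 :=
  le_antisymm (Finset.sup_le fun u _ => dist_le_one_of_forall_adj hc u)
    (SimpleGraph.dist_eq_one_iff_adj.2 (hc w hw) ▸ le_sup (mem_univ w))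

lemma ecc_eq_two {v w : V} (hc : ∀ u, u ≠ c → G.Adj c u) (hne : v ≠ w)
    (hnadj : ¬ G.Adj v w) : ecc G v = 2 :=
  le_antisymm (Finset.sup_le fun u _ => dist_le_two_of_forall_adj hc v u)
    (dist_eq_two_of_forall_adj hc hne hnadj ▸ le_sup (mem_univ w))

end Dominating

lemma card_filter_val_lt_or_le {n p q : ℕ} (hpq : p ≤ q) (hq : q ≤ n) :
    #{i : Fin n | i.val < p ∨ q ≤ i.val} = p + (n - q) := by
  have := card_filter_add_card_filter_not (s := (univ : Finset (Fin n))) (fun i => i.val < q)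
  rw [filter_or, card_union_of_disjoint (disjoint_filter.2 fun i _ h1 h2 => by omega)]
  simp only [Fin.card_filter_val_lt, not_lt, card_univ, Fintype.card_fin] at this ⊢
  omega

section KJoin2

variable {k a b : ℕ} {v u : Fin (k + a + b)}

lemma kJoin2_adj_of_lt (hv : v.val < k) (hu : u ≠ v) : (KJoin2 k a b).Adj v u :=
  ⟨hu.symm, Or.inl hv⟩

lemma kJoin2_adj_iff_of_le_of_lt (hkv : k ≤ v.val) (hva : v.val < k + a) :
    (KJoin2 k a b).Adj v u ↔ u ≠ v ∧ u.val < k + a := by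
  simp only [KJoin2, ne_eq, Fin.ext_iff]
  omega

lemma kJoin2_adj_iff_of_le (hv : k + a ≤ v.val) :
    (KJoin2 k a b).Adj v u ↔ u ≠ v ∧ (u.val < k ∨ k + a ≤ u.val) := by
  simp only [KJoin2, ne_eq, Fin.ext_iff]
  omega

lemma deg_kJoin2_of_lt (hv : v.val < k) : deg (KJoin2 k a b) v = k + a + b - 1 := by
  rw [deg_eq_card_filter_sub_one (fun _ => True)
    (fun _ => ⟨fun h => ⟨h.ne.symm, trivial⟩, fun h => kJoin2_adj_of_lt hv h.1⟩) trivial]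
  simp

lemma deg_kJoin2_of_le_of_lt (hkv : k ≤ v.val) (hva : v.val < k + a) :
    deg (KJoin2 k a b) v = k + a - 1 := by
  rw [deg_eq_card_filter_sub_one _ (fun _ => kJoin2_adj_iff_of_le_of_lt hkv hva) hva,
    Fin.card_filter_val_lt]
  omega

lemma deg_kJoin2_of_le (hv : k + a ≤ v.val) : deg (KJoin2 k a b) v = k + b - 1 := by
  rw [deg_eq_card_filter_sub_one _ (fun _ => kJoin2_adj_iff_of_le hv) (Or.inr hv),
    card_filter_val_lt_or_le (by omega) (by omega)]
  omega

lemma ecc_kJoin2_of_lt (ha : 0 < a) (hv : v.val < k) : ecc (KJoin2 k a b) v = 1 :=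
  ecc_eq_one (w := ⟨k, by omega⟩) (fun _ => kJoin2_adj_of_lt hv) (by simp [Fin.ext_iff]; omega)

lemma ecc_kJoin2_of_le_of_lt (hk : 0 < k) (hb : 0 < b) (hkv : k ≤ v.val) (hva : v.val < k + a) :
    ecc (KJoin2 k a b) v = 2 :=
  ecc_eq_two (c := ⟨0, by omega⟩) (w := ⟨k + a, by omega⟩) (fun _ => kJoin2_adj_of_lt hk)
    (by simp [Fin.ext_iff]; omega) (by simp [kJoin2_adj_iff_of_le_of_lt hkv hva])

lemma ecc_kJoin2_of_le (hk : 0 < k) (ha : 0 < a) (hv : k + a ≤ v.val) :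
    ecc (KJoin2 k a b) v = 2 :=
  ecc_eq_two (c := ⟨0, by omega⟩) (w := ⟨k, by omega⟩) (fun _ => kJoin2_adj_of_lt hk)
    (by simp [Fin.ext_iff]; omega) (by simp [kJoin2_adj_iff_of_le hv]; omega)

lemma cei_kJoin2 (hk : 0 < k) (ha : 0 < a) (hb : 0 < b) :
    cei (KJoin2 k a b) = k * ((k + a + b : ℝ) - 1) + a * ((k + a : ℝ) - 1) / 2
      + b * ((k + b : ℝ) - 1) / 2 := by
  rw [cei, Fin.sum_univ_add, Fin.sum_univ_add]
  have apex (i : Fin k) : (deg (KJoin2 k a b) (Fin.castAdd b (Fin.castAdd a i)) : ℝ)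
      / ecc (KJoin2 k a b) (Fin.castAdd b (Fin.castAdd a i)) = (k + a + b : ℝ) - 1 := by
    rw [deg_kJoin2_of_lt (by simp), ecc_kJoin2_of_lt ha (by simp), Nat.cast_pred (by omega)]
    simp
  have inA (i : Fin a) : (deg (KJoin2 k a b) (Fin.castAdd b (Fin.natAdd k i)) : ℝ)
      / ecc (KJoin2 k a b) (Fin.castAdd b (Fin.natAdd k i)) = ((k + a : ℝ) - 1) / 2 := by
    rw [deg_kJoin2_of_le_of_lt (by simp) (by simp),
      ecc_kJoin2_of_le_of_lt hk hb (by simp) (by simp), Nat.cast_pred (by omega)]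
    simp
  have inB (i : Fin b) : (deg (KJoin2 k a b) (Fin.natAdd (k + a) i) : ℝ)
      / ecc (KJoin2 k a b) (Fin.natAdd (k + a) i) = ((k + b : ℝ) - 1) / 2 := by
    rw [deg_kJoin2_of_le (by simp), ecc_kJoin2_of_le hk ha (by simp), Nat.cast_pred (by omega)]
    simp
  simp only [apex, inA, inB, sum_const, card_univ, Fintype.card_fin, nsmul_eq_mul]
  ring

end KJoin2

/-- for `2 ≤ a₁ ≤ a₂`,
`ξ^ce(K_k ∨ (K_{a₁} ∪ K_{a₂})) < ξ^ce(K_k ∨ (K_{a₁-1} ∪ K_{a₂+1}))`, and the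
difference equals `a₁ - 1 - a₂`. -/
theorem cei_KJoin2_shift (k a₁ a₂ : ℕ) (hk : 1 ≤ k) (h1 : 2 ≤ a₁) (h12 : a₁ ≤ a₂) :
    cei (KJoin2 k a₁ a₂) < cei (KJoin2 k (a₁ - 1) (a₂ + 1)) ∧
    cei (KJoin2 k a₁ a₂) - cei (KJoin2 k (a₁ - 1) (a₂ + 1)) =
      (a₁ : ℝ) - 1 - (a₂ : ℝ) := by
  have hdiff : cei (KJoin2 k a₁ a₂) - cei (KJoin2 k (a₁ - 1) (a₂ + 1)) =
      (a₁ : ℝ) - 1 - (a₂ : ℝ) := by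
    rw [cei_kJoin2 hk (by omega) (by omega), cei_kJoin2 hk (by omega) (by omega),
      Nat.cast_pred (by omega)]
    push_cast
    ring
  have ha : (a₁ : ℝ) ≤ a₂ := by exact_mod_cast h12
  exact ⟨by linarith, hdiff⟩

end CEI
end
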